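/- Let P be in the Carathéodory class 𝒫 with Taylor expansion P(z) = 1 + ∑_{n≥1} cₙ zⁿ, and let μ be a complex number. Then |c₂ − μ c₁²| ≤ 2·max{1, |2μ − 1|}. -/

import Mathlib

open Complex Metric

/-!
Put `ω = (P - 1) / (P + 1)`. Since `Re P > 0`, `ω` maps the disc into itself and `ω 0 = 0`, so by
Schwarz's lemma `ω z = z g z` with `|g| ≤ 1`. From `P - 1 = z g (P + 1)` one reads off
`c₁ = 2 g(0)` and `c₂ = 2 (g'(0) + g(0)²)`, hence `c₂ - μ c₁² = 2 (g'(0) + (1 - 2μ) g(0)²)`.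
The Schwarz–Pick bound `|g'(0)| ≤ 1 - |g(0)|²` makes the right side at most
`2 ((1 - |g(0)|²) + |2μ - 1| |g(0)|²)`, a convex combination of `2` and `2 |2μ - 1|`.
-/

/-- The `n`-th Taylor coefficient of `P` at `0`. -/
noncomputable def taylorCoeff (P : ℂ → ℂ) (n : ℕ) : ℂ :=
  iteratedDeriv n P 0 / (n.factorial : ℂ)

/-- `P` belongs to the Carathéodory class 𝒫: analytic on the unit disk,
`P 0 = 1`, and `Re P > 0` on the disk. -/
def MemCaratheodory (P : ℂ → ℂ) : Prop :=
  AnalyticOnNhd ℂ P (ball (0:ℂ) 1) ∧ P 0 = 1 ∧ ∀ z ∈ ball (0:ℂ) 1, 0 < (P z).re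

open ComplexConjugate Set Filter Topology

namespace Complex

theorem normSq_one_sub_conj_mul_sub_normSq_sub (a w : ℂ) :
    normSq (1 - conj a * w) - normSq (w - a) = (1 - normSq a) * (1 - normSq w) := by
  simp only [normSq_apply, sub_re, sub_im, mul_re, mul_im, conj_re, conj_im, one_re, one_im]
  ring

theorem norm_sub_div_one_sub_conj_mul_lt_one {a w : ℂ} (ha : ‖a‖ < 1) (hw : ‖w‖ < 1) :
    ‖(w - a) / (1 - conj a * w)‖ < 1 := by
  have hpos : 0 < normSq (1 - conj a * w) - normSq (w - a) := by
    rw [normSq_one_sub_conj_mul_sub_normSq_sub, ← Complex.sq_norm, ← Complex.sq_norm]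
    have := pow_lt_one₀ (norm_nonneg a) ha two_ne_zero
    have := pow_lt_one₀ (norm_nonneg w) hw two_ne_zero
    nlinarith
  rw [← Complex.sq_norm, ← Complex.sq_norm] at hpos
  have hlt : ‖w - a‖ < ‖1 - conj a * w‖ :=
    (sq_lt_sq₀ (norm_nonneg _) (norm_nonneg _)).1 (by linarith)
  rw [norm_div, div_lt_one ((norm_nonneg _).trans_lt hlt)]
  exact hlt

theorem norm_deriv_le_one_sub_sq_of_mapsTo_ball {g : ℂ → ℂ}
    (hd : DifferentiableOn ℂ g (ball 0 1)) (hg : MapsTo g (ball 0 1) (ball 0 1)) :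
    ‖deriv g 0‖ ≤ 1 - ‖g 0‖ ^ 2 := by
  have h0 : (0 : ℂ) ∈ ball (0 : ℂ) 1 := mem_ball_self one_pos
  set a := g 0
  have ha : ‖a‖ < 1 := mem_ball_zero_iff.1 (hg h0)
  have hden : ∀ z ∈ ball (0 : ℂ) 1, 1 - conj a * g z ≠ 0 := fun z hz => by
    refine sub_ne_zero.2 (Ne.symm (ne_of_apply_ne norm ?_))
    rw [norm_one, norm_mul, Complex.norm_conj]
    exact (mul_lt_one_of_nonneg_of_lt_one_left (norm_nonneg a) ha
      (mem_ball_zero_iff.1 (hg hz)).le).ne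
  -- compose `g` with the disc automorphism sending `a` to `0` and apply Schwarz's lemma
  set h : ℂ → ℂ := fun z => (g z - a) / (1 - conj a * g z)
  have hh0 : h 0 = 0 := by simp [h, a]
  have hhd : DifferentiableOn ℂ h (ball 0 1) :=
    (hd.sub_const a).div ((differentiableOn_const 1).sub (hd.const_mul _)) hden
  have hhmaps : MapsTo h (ball 0 1) (closedBall (h 0) 1) := fun z hz => by
    rw [hh0, mem_closedBall_zero_iff]
    exact (norm_sub_div_one_sub_conj_mul_lt_one ha (mem_ball_zero_iff.1 (hg hz))).le
  have hga : HasDerivAt g (deriv g 0) 0 :=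
    (hd.differentiableAt (isOpen_ball.mem_nhds h0)).hasDerivAt
  have hA : (1 - ‖a‖ ^ 2 : ℝ) ≠ 0 := by nlinarith [norm_nonneg a]
  have hderiv : deriv h 0 = deriv g 0 / (1 - ‖a‖ ^ 2 : ℝ) := by
    have hconj : 1 - conj a * a = ((1 - ‖a‖ ^ 2 : ℝ) : ℂ) := by
      rw [mul_comm, mul_conj, Complex.sq_norm]; push_cast; ring
    rw [(show HasDerivAt h _ 0 from
      (hga.sub_const a).fun_div ((hga.const_mul _).const_sub 1) (hden 0 h0)).deriv]
    simp only [show g 0 = a from rfl, sub_self, zero_mul, sub_zero, hconj]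
    field_simp [ofReal_ne_zero.2 hA]
  have hschwarz := norm_deriv_le_one_of_mapsTo_ball hhd hhmaps one_pos
  rwa [hderiv, norm_div, norm_real, Real.norm_of_nonneg (by nlinarith [norm_nonneg a]),
    div_le_one (by nlinarith [norm_nonneg a])] at hschwarz

theorem norm_deriv_le_one_sub_sq_of_mapsTo_closedBall {g : ℂ → ℂ}
    (hd : DifferentiableOn ℂ g (ball 0 1)) (hg : MapsTo g (ball 0 1) (closedBall 0 1)) :
    ‖deriv g 0‖ ≤ 1 - ‖g 0‖ ^ 2 := by
  have h0 : (0 : ℂ) ∈ ball (0 : ℂ) 1 := mem_ball_self one_pos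
  -- apply the open-disc version to `r * g` for `r < 1` and let `r → 1`
  have hscaled : ∀ r : ℝ, 0 < r → r < 1 → r * ‖deriv g 0‖ ≤ 1 - r ^ 2 * ‖g 0‖ ^ 2 := by
    intro r hr0 hr1
    have hmaps : MapsTo (fun z => (r : ℂ) * g z) (ball 0 1) (ball 0 1) := fun z hz => by
      rw [mem_ball_zero_iff, norm_mul, norm_real, Real.norm_of_nonneg hr0.le]
      exact mul_lt_one_of_nonneg_of_lt_one_left hr0.le hr1 (mem_closedBall_zero_iff.1 (hg hz))
    have := norm_deriv_le_one_sub_sq_of_mapsTo_ball (hd.const_mul _) hmaps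
    rwa [deriv_const_mul _ (hd.differentiableAt (isOpen_ball.mem_nhds h0)), norm_mul, norm_mul,
      norm_real, Real.norm_of_nonneg hr0.le, mul_pow] at this
  have hlim : ∀ c : ℝ → ℝ, Continuous c → Tendsto c (𝓝[<] 1) (𝓝 (c 1)) := fun c hc =>
    (hc.tendsto 1).mono_left nhdsWithin_le_nhds
  have := le_of_tendsto_of_tendsto (hlim (fun r => r * ‖deriv g 0‖) (by fun_prop))
    (hlim (fun r => 1 - r ^ 2 * ‖g 0‖ ^ 2) (by fun_prop))
    (by filter_upwards [Ioo_mem_nhdsLT one_pos] with r hr using hscaled r hr.1 hr.2)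
  simpa using this

theorem norm_sub_one_lt_norm_add_one {w : ℂ} (hw : 0 < w.re) : ‖w - 1‖ < ‖w + 1‖ := by
  rw [← sq_lt_sq₀ (norm_nonneg _) (norm_nonneg _), Complex.sq_norm, Complex.sq_norm]
  simp only [normSq_apply, sub_re, sub_im, add_re, add_im, one_re, one_im]
  nlinarith

theorem norm_add_mul_sq_le_max {a b : ℂ} (hb : ‖b‖ ≤ 1 - ‖a‖ ^ 2) (t : ℂ) :
    ‖b + t * a ^ 2‖ ≤ max 1 ‖t‖ := by
  have ha : ‖a‖ ^ 2 ≤ 1 := by linarith [norm_nonneg b]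
  calc ‖b + t * a ^ 2‖ ≤ ‖b‖ + ‖t‖ * ‖a‖ ^ 2 :=
        (norm_add_le _ _).trans_eq (by rw [norm_mul, norm_pow])
    _ ≤ (1 - ‖a‖ ^ 2) * max 1 ‖t‖ + ‖a‖ ^ 2 * max 1 ‖t‖ := by
        nlinarith [le_max_left 1 ‖t‖, le_max_right 1 ‖t‖, sq_nonneg ‖a‖]
    _ = max 1 ‖t‖ := by ring

end Complex

theorem taylorCoeff_zero (f : ℂ → ℂ) : taylorCoeff f 0 = f 0 := by
  simp [taylorCoeff]

theorem taylorCoeff_one (f : ℂ → ℂ) : taylorCoeff f 1 = deriv f 0 := by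
  simp [taylorCoeff]

theorem AnalyticAt.taylorCoeff_dslope {f : ℂ → ℂ} (hf : AnalyticAt ℂ f 0) (n : ℕ) :
    taylorCoeff (dslope f 0) n = taylorCoeff f (n + 1) := by
  have hslope := hf.hasFPowerSeriesAt.has_fpower_series_dslope_fslope
  have hseries := hslope.eq_formalMultilinearSeries hslope.analyticAt.hasFPowerSeriesAt
  simpa [taylorCoeff, FormalMultilinearSeries.coeff_fslope] using
    (congrArg (FormalMultilinearSeries.coeff · n) hseries).symm

noncomputable def cayleyTransform (P : ℂ → ℂ) (z : ℂ) : ℂ := (P z - 1) / (P z + 1)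

theorem cayleyTransform_zero {P : ℂ → ℂ} (h : P 0 = 1) : cayleyTransform P 0 = 0 := by
  simp [cayleyTransform, h]

namespace MemCaratheodory

variable {P : ℂ → ℂ}

theorem add_one_ne_zero (hP : MemCaratheodory P) {z : ℂ} (hz : z ∈ ball (0 : ℂ) 1) :
    P z + 1 ≠ 0 :=
  norm_pos_iff.1 ((norm_nonneg _).trans_lt (norm_sub_one_lt_norm_add_one (hP.2.2 z hz)))

theorem differentiableOn_cayleyTransform (hP : MemCaratheodory P) :
    DifferentiableOn ℂ (cayleyTransform P) (ball 0 1) :=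
  (hP.1.differentiableOn.sub_const 1).div (hP.1.differentiableOn.add_const 1)
    fun _ hz => hP.add_one_ne_zero hz

theorem mapsTo_cayleyTransform (hP : MemCaratheodory P) :
    MapsTo (cayleyTransform P) (ball 0 1) (ball 0 1) := fun z hz => by
  have hlt := norm_sub_one_lt_norm_add_one (hP.2.2 z hz)
  rw [mem_ball_zero_iff, cayleyTransform, norm_div, div_lt_one ((norm_nonneg _).trans_lt hlt)]
  exact hlt

theorem dslope_eventuallyEq (hP : MemCaratheodory P) :
    dslope P 0 =ᶠ[𝓝 0] fun z => dslope (cayleyTransform P) 0 z * (P z + 1) := by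
  have h0 : (0 : ℂ) ∈ ball (0 : ℂ) 1 := mem_ball_self one_pos
  have hPd : DifferentiableAt ℂ P 0 := (hP.1 0 h0).differentiableAt
  have hωd : DifferentiableAt ℂ (cayleyTransform P) 0 :=
    hP.differentiableOn_cayleyTransform.differentiableAt (isOpen_ball.mem_nhds h0)
  refine (ContinuousAt.eventuallyEq_nhds_iff_eventuallyEq_nhdsNE
    (continuousAt_dslope_same.2 hPd)
    ((continuousAt_dslope_same.2 hωd).mul (hPd.continuousAt.add continuousAt_const))).1 ?_
  filter_upwards [self_mem_nhdsWithin, nhdsWithin_le_nhds (isOpen_ball.mem_nhds h0)]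
    with z hz hzD
  change dslope P 0 z = dslope (cayleyTransform P) 0 z * (P z + 1)
  rw [dslope_of_ne _ hz, dslope_of_ne _ hz, slope_def_field, slope_def_field,
    cayleyTransform_zero hP.2.1, hP.2.1, cayleyTransform]
  field_simp [hP.add_one_ne_zero hzD]
  ring

theorem exists_taylorCoeff_eq (hP : MemCaratheodory P) : ∃ a b : ℂ, ‖b‖ ≤ 1 - ‖a‖ ^ 2 ∧
    taylorCoeff P 1 = 2 * a ∧ taylorCoeff P 2 = 2 * (b + a ^ 2) := by
  have h0 : (0 : ℂ) ∈ ball (0 : ℂ) 1 := mem_ball_self one_pos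
  set g := dslope (cayleyTransform P) 0
  have hgd : DifferentiableOn ℂ g (ball 0 1) :=
    (differentiableOn_dslope (isOpen_ball.mem_nhds h0)).2 hP.differentiableOn_cayleyTransform
  have hωmaps : MapsTo (cayleyTransform P) (ball 0 1) (closedBall (cayleyTransform P 0) 1) := by
    rw [cayleyTransform_zero hP.2.1]
    exact hP.mapsTo_cayleyTransform.mono_right ball_subset_closedBall
  have hgmaps : MapsTo g (ball 0 1) (closedBall 0 1) := fun z hz => by
    simpa using norm_dslope_le_div_of_mapsTo_ball hP.differentiableOn_cayleyTransform hωmaps hz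
  have hPa : AnalyticAt ℂ P 0 := hP.1 0 h0
  have hg : HasDerivAt g (deriv g 0) 0 :=
    (hgd.differentiableAt (isOpen_ball.mem_nhds h0)).hasDerivAt
  have hc₁ : taylorCoeff P 1 = 2 * g 0 := by
    rw [← hPa.taylorCoeff_dslope, taylorCoeff_zero, hP.dslope_eventuallyEq.eq_of_nhds, hP.2.1]
    ring
  refine ⟨g 0, deriv g 0, norm_deriv_le_one_sub_sq_of_mapsTo_closedBall hgd hgmaps, hc₁, ?_⟩
  rw [← hPa.taylorCoeff_dslope, taylorCoeff_one, hP.dslope_eventuallyEq.deriv_eq,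
    (hg.fun_mul (hPa.differentiableAt.hasDerivAt.add_const 1)).deriv, hP.2.1,
    ← taylorCoeff_one P, hc₁]
  ring

end MemCaratheodory

/-- For `P ∈ 𝒫` with coefficients `cₙ` and any `μ ∈ ℂ`,
`|c₂ − μ c₁²| ≤ 2 max{1, |2μ − 1|}`. -/
theorem caratheodory_fekete_szego (P : ℂ → ℂ) (hP : MemCaratheodory P) (μ : ℂ) :
    ‖taylorCoeff P 2 - μ * (taylorCoeff P 1) ^ 2‖ ≤
      2 * max 1 ‖2 * μ - 1‖ := by
  obtain ⟨a, b, hab, hc₁, hc₂⟩ := hP.exists_taylorCoeff_eq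
  have hexpr : taylorCoeff P 2 - μ * taylorCoeff P 1 ^ 2 = 2 * (b + (1 - 2 * μ) * a ^ 2) := by
    rw [hc₁, hc₂]; ring
  rw [hexpr, norm_mul, Complex.norm_two, ← norm_neg (2 * μ - 1), neg_sub]
  gcongr
  exact norm_add_mul_sq_le_max hab _
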